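/- For every integer N ≥ 1, every binary string b ∈ {0,1}^N, every 1 ≤ ℓ ≤ N, every integer k with ℓ < k ≤ N, and every (x,y) ∈ S_ℓ(b): if φ_{k,b}(x,y) > 0, then φ_{k,b}(x,y) ≤ 2 φ_{k−1,b}(x,y). -/

import Mathlib

open scoped BigOperators

/-- `[b]_k = ∑_{i=1}^k b_i 2^{-(i+2)}` (bits are zero-indexed in `b`). -/
noncomputable def bitsVal (b : ℕ → Bool) (k : ℕ) : ℝ :=
  ∑ i ∈ Finset.range k, (if b i then (1 : ℝ) else 0) * (2 : ℝ) ^ (-((i : ℤ) + 3))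

/-- `φ_{k,b}(x,y) = max(0, |y − [b]_k x| − (2^{-k} x + 2^{-(3N−k)}))`. -/
noncomputable def phi (N : ℕ) (b : ℕ → Bool) (k : ℕ) (x y : ℝ) : ℝ :=
  max 0 (|y - bitsVal b k * x| - ((2 : ℝ) ^ (-(k : ℤ)) * x + (2 : ℝ) ^ (-(3 * (N : ℤ) - k))))

/-- `max_{k=1,…,j} 2^{-k} φ_{k,b}(x,y)`. -/
noncomputable def maxPhi (N : ℕ) (b : ℕ → Bool) (j : ℕ) (x y : ℝ) : ℝ :=
  ⨆ k : Finset.Icc 1 j, (2 : ℝ) ^ (-((k : ℕ) : ℤ)) * phi N b (k : ℕ) x y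

/-- The potential `Ṽ_b = 2^{7N} max_{k=1,…,N} 2^{-k} φ_{k,b}`. -/
noncomputable def Vt (N : ℕ) (b : ℕ → Bool) (x y : ℝ) : ℝ :=
  2 ^ (7 * N) * maxPhi N b N x y

lemma myGeomIco (m n : ℕ) (h : m ≤ n) :
    ∑ i ∈ Finset.Ico m n, (2:ℝ)^(-((i:ℤ)+3)) = (2:ℝ)^(-(m:ℤ)-2) - (2:ℝ)^(-(n:ℤ)-2) := by
  induction n, h using Nat.le_induction with
  | base => simp
  | succ n hmn ih =>
    rw [Finset.sum_Ico_succ_top hmn, ih]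
    have h1 : (-(n:ℤ)-2) = (-((n:ℤ)+3))+1 := by ring
    have h2 : (2:ℝ)^(-(n:ℤ)-2) = 2^(-((n:ℤ)+3)) * 2 := by
      rw [h1, zpow_add_one₀ (two_ne_zero)]
    push_cast
    rw [show (-((n:ℤ)+1)-2) = -((n:ℤ)+3) by ring]
    linarith

lemma bitsVal_diff (b : ℕ → Bool) {m n : ℕ} (h : m ≤ n) :
    0 ≤ bitsVal b n - bitsVal b m ∧ bitsVal b n - bitsVal b m ≤ (2:ℝ)^(-(m:ℤ)-2) := by
  have hsum : bitsVal b n - bitsVal b m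
      = ∑ i ∈ Finset.Ico m n, (if b i then (1 : ℝ) else 0) * (2 : ℝ) ^ (-((i : ℤ) + 3)) := by
    unfold bitsVal
    rw [← Finset.sum_range_add_sum_Ico _ h]
    ring
  constructor
  · rw [hsum]
    apply Finset.sum_nonneg
    intro i _
    positivity
  · rw [hsum]
    calc _ ≤ ∑ i ∈ Finset.Ico m n, (2:ℝ)^(-((i:ℤ)+3)) := by
            apply Finset.sum_le_sum; intro i _
            split <;> simp <;> try positivity
      _ = (2:ℝ)^(-(m:ℤ)-2) - (2:ℝ)^(-(n:ℤ)-2) := myGeomIco m n h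
      _ ≤ (2:ℝ)^(-(m:ℤ)-2) := by
            have : (0:ℝ) ≤ (2:ℝ)^(-(n:ℤ)-2) := by positivity
            linarith


/-- On the set `S_ℓ(b)`, for any `ℓ < k ≤ N`: if `φ_{k,b}(x,y) > 0`, then
`φ_{k,b}(x,y) ≤ 2 φ_{k−1,b}(x,y)`. -/
theorem stmt_5 (N : ℕ) (hN : 1 ≤ N) (b : ℕ → Bool) (ℓ k : ℕ) (hℓ1 : 1 ≤ ℓ) (hℓ2 : ℓ ≤ N)
    (hk1 : ℓ < k) (hk2 : k ≤ N) (x y : ℝ)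
    (hS : x < (1 / 4) * (2 : ℝ) ^ (-(3 * (N : ℤ))) ∨
      100 * (2 : ℝ) ^ (-(ℓ : ℤ)) * x ≤ |y - bitsVal b ℓ * x|)
    (hpos : 0 < phi N b k x y) :
    phi N b k x y ≤ 2 * phi N b (k - 1) x y := by
  have hk1' : 1 ≤ k := le_trans hℓ1 hk1.le
  -- positivity of the inner expression at k
  have hDk : 0 < |y - bitsVal b k * x| - ((2:ℝ)^(-(k:ℤ)) * x + (2:ℝ)^(-(3*(N:ℤ)-k))) := by
    rcases lt_max_iff.mp hpos with h | h
    · exact absurd h (lt_irrefl _)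
    · exact h
  have hphik : phi N b k x y
      = |y - bitsVal b k * x| - ((2:ℝ)^(-(k:ℤ)) * x + (2:ℝ)^(-(3*(N:ℤ)-k))) :=
    max_eq_right hDk.le
  -- bit-differences
  obtain ⟨hc0, hc1⟩ := bitsVal_diff b hk1.le
  obtain ⟨hd0, hd1⟩ := bitsVal_diff b (Nat.sub_le k 1)
  have hkm : ((k - 1 : ℕ) : ℤ) = (k : ℤ) - 1 := by
    rw [Nat.cast_sub hk1']; norm_num
  rw [hkm] at hd1
  have hsplitk1 : (2:ℝ)^(-((k:ℤ)-1)-2) = (2:ℝ)^(-(k:ℤ)) / 2 := by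
    rw [show (-((k:ℤ)-1)-2) = (-(k:ℤ)) - 1 by ring, zpow_sub₀ (two_ne_zero)]; norm_num
  -- power facts
  have hpk : (0:ℝ) < (2:ℝ)^(-(k:ℤ)) := by positivity
  have hsplitk : (2:ℝ)^(-(k:ℤ)-2) = (2:ℝ)^(-(k:ℤ)) / 4 := by
    rw [zpow_sub₀ (two_ne_zero)]; norm_num
  have hsplitl : (2:ℝ)^(-(ℓ:ℤ)-2) = (2:ℝ)^(-(ℓ:ℤ)) / 4 := by
    rw [zpow_sub₀ (two_ne_zero)]; norm_num
  have hkl : (2:ℝ)^(-(k:ℤ)) ≤ (2:ℝ)^(-(ℓ:ℤ)) := by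
    apply zpow_le_zpow_right₀ one_le_two
    omega
  have hk12 : (2:ℝ)^(-(k:ℤ)) ≤ 1/2 := by
    calc (2:ℝ)^(-(k:ℤ)) ≤ (2:ℝ)^(-1:ℤ) := by
          apply zpow_le_zpow_right₀ one_le_two; omega
      _ = 1/2 := by norm_num
  -- KEY inequality
  have key : 4 * (2:ℝ)^(-(k:ℤ)) * x ≤ |y - bitsVal b k * x| := by
    rcases le_or_gt 0 x with hx | hx
    · rcases hS with hs | hs
      · -- small x
        have h1 : (2:ℝ)^(1-3*(N:ℤ)) ≤ (2:ℝ)^(-(3*(N:ℤ)-k)) := by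
          apply zpow_le_zpow_right₀ one_le_two; omega
        have h2 : (2:ℝ)^(1-3*(N:ℤ)) = 8 * ((1/4) * (2:ℝ)^(-(3*(N:ℤ)))) := by
          rw [show (1-3*(N:ℤ)) = (-(3*(N:ℤ)))+1 by ring, zpow_add_one₀ (two_ne_zero)]
          ring
        nlinarith
      · -- large slope
        have hAk : y - bitsVal b k * x
            = (y - bitsVal b ℓ * x) - (bitsVal b k - bitsVal b ℓ) * x := by ring
        have habs : |y - bitsVal b ℓ * x| - |(bitsVal b k - bitsVal b ℓ) * x|
            ≤ |y - bitsVal b k * x| := by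
          rw [hAk]; exact abs_sub_abs_le_abs_sub _ _
        have habs2 : |(bitsVal b k - bitsVal b ℓ) * x| = (bitsVal b k - bitsVal b ℓ) * x := by
          rw [abs_of_nonneg (mul_nonneg hc0 hx)]
        have hcx : (bitsVal b k - bitsVal b ℓ) * x ≤ ((2:ℝ)^(-(ℓ:ℤ)) / 4) * x := by
          apply mul_le_mul_of_nonneg_right _ hx
          rw [← hsplitl]; exact hc1
        nlinarith
    · have : 4 * (2:ℝ)^(-(k:ℤ)) * x < 0 := by
        apply mul_neg_of_pos_of_neg (by positivity) hx
      exact le_trans this.le (abs_nonneg _)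
  -- relate |A (k-1)| to |A k|
  have hAkm : y - bitsVal b (k-1) * x
      = (y - bitsVal b k * x) + (bitsVal b k - bitsVal b (k-1)) * x := by ring
  have habs : |y - bitsVal b k * x| - |(bitsVal b k - bitsVal b (k-1)) * x|
      ≤ |y - bitsVal b (k-1) * x| := by
    rw [hAkm]
    have h := abs_sub_abs_le_abs_sub (y - bitsVal b k * x)
      (-((bitsVal b k - bitsVal b (k-1)) * x))
    rw [abs_neg, sub_neg_eq_add] at h
    exact h
  have hdx : |(bitsVal b k - bitsVal b (k-1)) * x| ≤ ((2:ℝ)^(-(k:ℤ)) / 2) * |x| := by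
    rw [abs_mul, abs_of_nonneg hd0]
    apply mul_le_mul_of_nonneg_right _ (abs_nonneg x)
    rw [← hsplitk1]; exact hd1
  -- exponent identities at k-1
  have hexp1 : (2:ℝ)^(-((k-1:ℕ):ℤ)) = 2 * (2:ℝ)^(-(k:ℤ)) := by
    rw [hkm, show (-((k:ℤ)-1)) = (-(k:ℤ)) + 1 by ring, zpow_add_one₀ (two_ne_zero)]
    ring
  have hexp2 : (2:ℝ)^(-(3*(N:ℤ)-((k-1:ℕ):ℤ))) = (2:ℝ)^(-(3*(N:ℤ)-k)) / 2 := by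
    rw [hkm, show (-(3*(N:ℤ)-((k:ℤ)-1))) = (-(3*(N:ℤ)-(k:ℤ))) - 1 by ring,
      zpow_sub_one₀ (two_ne_zero)]
    ring
  -- conclude
  have hphikm : |y - bitsVal b (k-1) * x|
      - ((2:ℝ)^(-((k-1:ℕ):ℤ)) * x + (2:ℝ)^(-(3*(N:ℤ)-((k-1:ℕ):ℤ)))) ≤ phi N b (k-1) x y :=
    le_max_right _ _
  rw [hphik, hexp1, hexp2] at *
  rcases le_or_gt 0 x with hx | hx
  · rw [abs_of_nonneg hx] at hdx
    nlinarith
  · rw [abs_of_neg hx] at hdx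
    nlinarith [abs_nonneg (y - bitsVal b k * x)]
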